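/- arXiv:2404.00263 — 2 statements merged into one kernel-verified Lean document; each statement's English description precedes it below -/
import Mathlib

section
/- Let P be a finite poset and let I and J be poset ideals of P with I ≠ J. Then conv{ρ(I), ρ(J)} is an edge of the order polytope O(P) if and only if (after possibly swapping I and J) I ⊆ J and J ∖ I is connected in P. -/
open Finset
open scoped Classical

variable (P : Type*) [Fintype P] [PartialOrder P]

/-- The comparability graph of a poset. -/
def compGraph : SimpleGraph P where
  Adj x y := x ≠ y ∧ (x ≤ y ∨ y ≤ x)
  symm := ⟨fun _ _ h => ⟨h.1.symm, h.2.symm⟩⟩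
  loopless := ⟨fun _ h => h.1 rfl⟩

/-- A subset `W` of `P` is connected in `P` if the subgraph of the comparability
graph induced on `W` is connected (this includes `W` being nonempty). -/
def ConnIn (W : Set P) : Prop :=
  (SimpleGraph.induce W (compGraph P)).Connected

/-- A poset ideal (down-set). -/
def IsIdealF (I : Finset P) : Prop :=
  ∀ ⦃x y : P⦄, x ∈ I → y ≤ x → y ∈ I

/-- An antichain of the poset. -/
def IsAntichainF (A : Finset P) : Prop :=
  IsAntichain (· ≤ ·) (↑A : Set P)

/-- The 0/1 indicator vector of a subset of `P`. -/
noncomputable def rho (W : Finset P) : P → ℝ :=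
  fun x => if x ∈ W then 1 else 0

/-- The order polytope of `P`. -/
def orderPolytope : Set (P → ℝ) :=
  {f | (∀ x, 0 ≤ f x ∧ f x ≤ 1) ∧ ∀ ⦃x y : P⦄, x ≤ y → f y ≤ f x}

/-- The chain polytope of `P`. -/
def chainPolytope : Set (P → ℝ) :=
  {f | (∀ x, 0 ≤ f x) ∧ ∀ s : Finset P, IsChain (· ≤ ·) (↑s : Set P) → ∑ x ∈ s, f x ≤ 1}

/-- `conv {u, v}` is an edge (1-dimensional exposed face) of the polytope `S`. -/
def IsEdgeOf (S : Set (P → ℝ)) (u v : P → ℝ) : Prop :=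
  u ≠ v ∧ IsExposed ℝ S (convexHull ℝ {u, v})

/-- `conv {u, v, w}` is a triangular 2-face of the polytope `S`. -/
def IsTriFaceOf (S : Set (P → ℝ)) (u v w : P → ℝ) : Prop :=
  u ≠ v ∧ u ≠ w ∧ v ≠ w ∧ IsExposed ℝ S (convexHull ℝ {u, v, w})

/-- The set of maximal elements of a subset of `P`. -/
noncomputable def maxSet (W : Finset P) : Finset P :=
  W.filter (fun x => ∀ y ∈ W, ¬ x < y)

/-- The set of minimal elements of a subset of `P`. -/
noncomputable def minSet (W : Finset P) : Finset P :=
  W.filter (fun x => ∀ y ∈ W, ¬ y < x)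

/-- The poset ideal generated by a subset of `P`. -/
noncomputable def genIdeal (A : Finset P) : Finset P :=
  univ.filter (fun x => ∃ a ∈ A, x ≤ a)

/-- The pair `{I, J}` belongs to `E*_O(P)`. -/
noncomputable def EstarO (I J : Finset P) : Prop :=
  IsIdealF P I ∧ IsIdealF P J ∧ I ≠ J ∧
    IsEdgeOf P (orderPolytope P) (rho P I) (rho P J) ∧
    ¬ IsEdgeOf P (chainPolytope P) (rho P (maxSet P I)) (rho P (maxSet P J))

/-- The pair `{A, B}` belongs to `E*_C(P)`. -/
noncomputable def EstarC (A B : Finset P) : Prop :=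
  IsAntichainF P A ∧ IsAntichainF P B ∧ A ≠ B ∧
    IsEdgeOf P (chainPolytope P) (rho P A) (rho P B) ∧
    ¬ IsEdgeOf P (orderPolytope P) (rho P (genIdeal P A)) (rho P (genIdeal P B))

/-- `Δ_O(P)`: unordered triples of pairwise distinct poset ideals spanning a
triangular 2-face of the order polytope. -/
def DeltaO : Set (Finset (Finset P)) :=
  {T | ∃ I J K : Finset P, T = {I, J, K} ∧ I ≠ J ∧ I ≠ K ∧ J ≠ K ∧
    IsIdealF P I ∧ IsIdealF P J ∧ IsIdealF P K ∧
    IsTriFaceOf P (orderPolytope P) (rho P I) (rho P J) (rho P K)}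

/-- `Δ_C(P)`: unordered triples of pairwise distinct antichains spanning a
triangular 2-face of the chain polytope. -/
def DeltaC : Set (Finset (Finset P)) :=
  {T | ∃ A B C : Finset P, T = {A, B, C} ∧ A ≠ B ∧ A ≠ C ∧ B ≠ C ∧
    IsAntichainF P A ∧ IsAntichainF P B ∧ IsAntichainF P C ∧
    IsTriFaceOf P (chainPolytope P) (rho P A) (rho P B) (rho P C)}

/-- `Δ*_O(P)`: triples in `Δ_O(P)` at least one of whose pairs lies in `E*_O(P)`. -/
def DeltaStarO : Set (Finset (Finset P)) :=
  {T | T ∈ DeltaO P ∧ ∃ I ∈ T, ∃ J ∈ T, I ≠ J ∧ EstarO P I J}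

/-- `Δ*_C(P)`: triples in `Δ_C(P)` at least one of whose pairs lies in `E*_C(P)`. -/
def DeltaStarC : Set (Finset (Finset P)) :=
  {T | T ∈ DeltaC P ∧ ∃ A ∈ T, ∃ B ∈ T, A ≠ B ∧ EstarC P A B}

/-- `r` is a rank function exhibiting `P` as a maximal ranked poset of rank `n`:
`r` is surjective onto `{0, …, n}` and `x < y ↔ r x < r y`. -/
def IsMaxRanked (r : P → ℕ) (n : ℕ) : Prop :=
  (∀ x, r x ≤ n) ∧ (∀ i, i ≤ n → ∃ x, r x = i) ∧ (∀ x y : P, x < y ↔ r x < r y)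

/-- The rank level `P_i`. -/
noncomputable def level (r : P → ℕ) (i : ℕ) : Finset P :=
  univ.filter (fun x => r x = i)

/-- `P` contains an `X`-poset as a subposet. -/
def ContainsX : Prop :=
  ∃ a b c d e : P,
    a ≠ b ∧ a ≠ c ∧ a ≠ d ∧ a ≠ e ∧ b ≠ c ∧ b ≠ d ∧ b ≠ e ∧ c ≠ d ∧ c ≠ e ∧ d ≠ e ∧
    a < c ∧ b < c ∧ c < d ∧ c < e ∧ ¬ a ≤ b ∧ ¬ b ≤ a ∧ ¬ d ≤ e ∧ ¬ e ≤ d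

section Helpers

lemma rho_mem_OP {I : Finset P} (hI : IsIdealF P I) : rho P I ∈ orderPolytope P := by
  constructor
  · intro x; unfold rho; split <;> norm_num
  · intro x y hxy
    by_cases h : y ∈ I
    · have hx : x ∈ I := hI h hxy
      simp [rho, h, hx]
    · simp only [rho, if_neg h]
      split <;> norm_num

lemma OP_convex : Convex ℝ (orderPolytope P) := by
  intro f hf g hg a b ha hb hab
  refine ⟨fun x => ?_, fun x y hxy => ?_⟩
  · have h1 := (hf.1 x).1; have h2 := (hf.1 x).2
    have h3 := (hg.1 x).1; have h4 := (hg.1 x).2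
    constructor
    · have : 0 ≤ a * f x + b * g x := by positivity
      simpa [Pi.add_apply, Pi.smul_apply, smul_eq_mul] using this
    · have : a * f x + b * g x ≤ 1 := by nlinarith
      simpa [Pi.add_apply, Pi.smul_apply, smul_eq_mul] using this
  · have h1 := hf.2 hxy
    have h2 := hg.2 hxy
    have : a * f y + b * g y ≤ a * f x + b * g x := by nlinarith
    simpa [Pi.add_apply, Pi.smul_apply, smul_eq_mul] using this

lemma rho_inj {K L : Finset P} (h : rho P K = rho P L) : K = L := by
  ext x
  have hx := congrFun h x
  by_cases hK : x ∈ K <;> by_cases hL : x ∈ L <;> simp [rho, hK, hL] at hx ⊢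

lemma segment_rho {I J K : Finset P} (hne : I ≠ J)
    (h : rho P K ∈ convexHull ℝ ({rho P I, rho P J} : Set (P → ℝ))) : K = I ∨ K = J := by
  rw [convexHull_pair] at h
  obtain ⟨a, b, ha, hb, hab, heq⟩ := h
  have hcase : a = 0 ∨ a = 1 := by
    have hx : ∃ x, (x ∈ I ∧ x ∉ J) ∨ (x ∈ J ∧ x ∉ I) := by
      by_contra hc
      push_neg at hc
      exact hne (by ext x; have := hc x; tauto)
    obtain ⟨x, hx⟩ := hx
    have hx' := congrFun heq x
    simp only [Pi.add_apply, Pi.smul_apply, smul_eq_mul] at hx'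
    rcases hx with ⟨h1, h2⟩ | ⟨h1, h2⟩ <;>
      by_cases hK : x ∈ K <;> simp [rho, h1, h2, hK] at hx' <;>
      [right; left; left; right] <;> linarith
  rcases hcase with h0 | h1
  · right
    have hb1 : b = 1 := by linarith
    apply rho_inj P
    rw [← heq, h0, hb1]; simp
  · left
    have hb0 : b = 0 := by linarith
    apply rho_inj P
    rw [← heq, h1, hb0]; simp

lemma walk_const {W : Set P} (f : P → ℝ)
    (hadj : ∀ x ∈ W, ∀ y ∈ W, x < y → f x = f y) :
    ∀ {a b : W}, (SimpleGraph.induce W (compGraph P)).Walk a b → f a = f b := by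
  intro a b w
  induction w with
  | nil => rfl
  | @cons u v _ h _ ih =>
    have h' : (compGraph P).Adj ↑u ↑v := h
    obtain ⟨hne, hle | hle⟩ := h'
    · exact (hadj u u.2 v v.2 (lt_of_le_of_ne hle hne)).trans ih
    · exact ((hadj v v.2 u u.2 (lt_of_le_of_ne hle hne.symm)).symm).trans ih

/-- The exposing linear functional. -/
noncomputable def lfun (I J : Finset P) (E : Finset (P × P)) : (P → ℝ) →ₗ[ℝ] ℝ where
  toFun f := ∑ x ∈ I, f x - ∑ x ∈ Jᶜ, f x - ∑ p ∈ E, (f p.1 - f p.2)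
  map_add' f g := by
    have hpair : ∀ p : P × P, f p.1 + g p.1 - (f p.2 + g p.2)
        = (f p.1 - f p.2) + (g p.1 - g p.2) := fun p => by ring
    simp only [Pi.add_apply]
    simp_rw [hpair, Finset.sum_add_distrib]
    ring
  map_smul' c f := by
    simp only [Pi.smul_apply, smul_eq_mul, RingHom.id_apply, Finset.mul_sum, mul_sub]

lemma lfun_deficit (I J : Finset P) (E : Finset (P × P)) (f : P → ℝ) :
    (I.card : ℝ) - lfun P I J E f =
      ∑ x ∈ I, (1 - f x) + ∑ x ∈ Jᶜ, f x + ∑ p ∈ E, (f p.1 - f p.2) := by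
  simp only [lfun, LinearMap.coe_mk, AddHom.coe_mk, Finset.sum_sub_distrib,
    Finset.sum_const, nsmul_eq_mul, mul_one]
  ring

/-- Midpoint trick. -/
lemma edge_split {I J K L : Finset P} (hK : IsIdealF P K) (hL : IsIdealF P L)
    (hedge : IsEdgeOf P (orderPolytope P) (rho P I) (rho P J)) (hne : I ≠ J)
    (hsum : rho P K + rho P L = rho P I + rho P J) : K = I ∨ K = J := by
  obtain ⟨hne', hexp⟩ := hedge
  have hnonempty : (convexHull ℝ ({rho P I, rho P J} : Set (P → ℝ))).Nonempty :=
    ⟨rho P I, subset_convexHull ℝ _ (by simp)⟩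
  obtain ⟨l, hl⟩ := hexp hnonempty
  have huF : rho P I ∈ convexHull ℝ ({rho P I, rho P J} : Set (P → ℝ)) :=
    subset_convexHull ℝ _ (by simp)
  have hvF : rho P J ∈ convexHull ℝ ({rho P I, rho P J} : Set (P → ℝ)) :=
    subset_convexHull ℝ _ (by simp)
  rw [hl] at huF hvF
  have hKS : rho P K ∈ orderPolytope P := rho_mem_OP P hK
  have hLS : rho P L ∈ orderPolytope P := rho_mem_OP P hL
  have h1 : l (rho P K) ≤ l (rho P I) := huF.2 _ hKS
  have h2 : l (rho P L) ≤ l (rho P I) := huF.2 _ hLS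
  have h3 : l (rho P J) ≤ l (rho P I) := huF.2 _ hvF.1
  have h4 : l (rho P I) ≤ l (rho P J) := hvF.2 _ huF.1
  have h5 : l (rho P K) + l (rho P L) = l (rho P I) + l (rho P J) := by
    rw [← map_add, ← map_add, hsum]
  have h6 : l (rho P K) = l (rho P I) := by linarith
  have hKF : rho P K ∈ convexHull ℝ ({rho P I, rho P J} : Set (P → ℝ)) := by
    rw [hl]
    exact ⟨hKS, fun y hy => h6 ▸ huF.2 y hy⟩
  exact segment_rho P hne hKF

/-- Backward direction. -/
lemma edge_of_conn {I J : Finset P} (hI : IsIdealF P I) (hJ : IsIdealF P J)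
    (hne : I ≠ J) (hsub : I ⊆ J) (hconn : ConnIn P (↑(J \ I) : Set P)) :
    IsEdgeOf P (orderPolytope P) (rho P I) (rho P J) := by
  have hW : ∃ w, w ∈ J ∧ w ∉ I := by
    by_contra hc
    push_neg at hc
    exact hne (Finset.Subset.antisymm hsub hc)
  obtain ⟨w0, hw0J, hw0I⟩ := hW
  constructor
  · intro h; exact hne (rho_inj P h)
  intro _
  set E : Finset (P × P) :=
    Finset.univ.filter (fun p => p.1 ∈ J ∧ p.1 ∉ I ∧ p.2 ∈ J ∧ p.2 ∉ I ∧ p.1 < p.2) with hE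
  refine ⟨LinearMap.toContinuousLinearMap (lfun P I J E), ?_⟩
  set L := lfun P I J E with hLdef
  have hLcoe : ∀ f, (LinearMap.toContinuousLinearMap L) f = L f := fun f => rfl
  -- maximum value is I.card on the polytope
  have hmax : ∀ f ∈ orderPolytope P, L f ≤ I.card := by
    intro f hf
    have hd := lfun_deficit P I J E f
    have t1 : (0:ℝ) ≤ ∑ x ∈ I, (1 - f x) :=
      Finset.sum_nonneg fun x _ => by linarith [(hf.1 x).2]
    have t2 : (0:ℝ) ≤ ∑ x ∈ Jᶜ, f x :=
      Finset.sum_nonneg fun x _ => (hf.1 x).1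
    have t3 : (0:ℝ) ≤ ∑ p ∈ E, (f p.1 - f p.2) := by
      refine Finset.sum_nonneg fun p hp => ?_
      simp only [hE, Finset.mem_filter] at hp
      have := hf.2 hp.2.2.2.2.2.le
      linarith
    linarith
  have hvalI : L (rho P I) = I.card := by
    have hd := lfun_deficit P I J E (rho P I)
    have t1 : ∑ x ∈ I, (1 - rho P I x) = 0 :=
      Finset.sum_eq_zero fun x hx => by simp [rho, hx]
    have t2 : ∑ x ∈ Jᶜ, rho P I x = 0 :=
      Finset.sum_eq_zero fun x hx => by
        simp only [Finset.mem_compl] at hx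
        have hxI : x ∉ I := fun h => hx (hsub h)
        simp [rho, hxI]
    have t3 : ∑ p ∈ E, (rho P I p.1 - rho P I p.2) = 0 := by
      refine Finset.sum_eq_zero fun p hp => ?_
      simp only [hE, Finset.mem_filter] at hp
      simp [rho, hp.2.2.1, hp.2.2.2.2.1]
    linarith
  have hvalJ : L (rho P J) = I.card := by
    have hd := lfun_deficit P I J E (rho P J)
    have t1 : ∑ x ∈ I, (1 - rho P J x) = 0 :=
      Finset.sum_eq_zero fun x hx => by simp [rho, hsub hx]
    have t2 : ∑ x ∈ Jᶜ, rho P J x = 0 :=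
      Finset.sum_eq_zero fun x hx => by
        simp only [Finset.mem_compl] at hx
        simp [rho, hx]
    have t3 : ∑ p ∈ E, (rho P J p.1 - rho P J p.2) = 0 := by
      refine Finset.sum_eq_zero fun p hp => ?_
      simp only [hE, Finset.mem_filter] at hp
      simp [rho, hp.2.1, hp.2.2.2.1]
    linarith
  have huS : rho P I ∈ orderPolytope P := rho_mem_OP P hI
  have hvS : rho P J ∈ orderPolytope P := rho_mem_OP P hJ
  ext z
  simp only [Set.mem_setOf_eq, hLcoe]
  constructor
  · intro hz
    rw [convexHull_pair] at hz
    obtain ⟨a, b, ha, hb, hab, heq⟩ := hz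
    have hzS : z ∈ orderPolytope P := by
      rw [← heq]
      exact OP_convex P huS hvS ha hb hab
    refine ⟨hzS, fun y hy => ?_⟩
    have : L z = I.card := by
      rw [← heq, map_add, map_smul, map_smul, smul_eq_mul, smul_eq_mul, hvalI, hvalJ]
      nlinarith
    rw [this]
    exact hmax y hy
  · rintro ⟨hzS, hzmax⟩
    have hLz : L z = I.card := by
      have h1 : L (rho P I) ≤ L z := hzmax _ huS
      have h2 := hmax z hzS
      linarith
    -- tightness
    have hd := lfun_deficit P I J E z
    have t1' : ∀ x ∈ I, 0 ≤ 1 - z x := fun x _ => by linarith [(hzS.1 x).2]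
    have t2' : ∀ x ∈ Jᶜ, 0 ≤ z x := fun x _ => (hzS.1 x).1
    have t3' : ∀ p ∈ E, 0 ≤ z p.1 - z p.2 := by
      intro p hp
      simp only [hE, Finset.mem_filter] at hp
      have := hzS.2 hp.2.2.2.2.2.le
      linarith
    have hzero : ∑ x ∈ I, (1 - z x) + ∑ x ∈ Jᶜ, z x + ∑ p ∈ E, (z p.1 - z p.2) = 0 := by
      linarith
    have s1 : ∑ x ∈ I, (1 - z x) = 0 := by
      have := Finset.sum_nonneg t2'
      have := Finset.sum_nonneg t3'
      have := Finset.sum_nonneg t1'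
      linarith
    have s2 : ∑ x ∈ Jᶜ, z x = 0 := by
      have := Finset.sum_nonneg t2'
      have := Finset.sum_nonneg t3'
      have := Finset.sum_nonneg t1'
      linarith
    have s3 : ∑ p ∈ E, (z p.1 - z p.2) = 0 := by
      have := Finset.sum_nonneg t2'
      have := Finset.sum_nonneg t3'
      have := Finset.sum_nonneg t1'
      linarith
    have e1 : ∀ x ∈ I, z x = 1 := by
      intro x hx
      have := (Finset.sum_eq_zero_iff_of_nonneg t1').1 s1 x hx
      linarith
    have e2 : ∀ x, x ∉ J → z x = 0 := by
      intro x hx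
      exact (Finset.sum_eq_zero_iff_of_nonneg t2').1 s2 x (Finset.mem_compl.2 hx)
    have e3 : ∀ x ∈ (↑(J \ I) : Set P), ∀ y ∈ (↑(J \ I) : Set P), x < y → z x = z y := by
      intro x hx y hy hxy
      simp only [Finset.coe_sdiff, Set.mem_diff, Finset.mem_coe] at hx hy
      have hp : (x, y) ∈ E := by
        simp [hE, hx.1, hx.2, hy.1, hy.2, hxy]
      have := (Finset.sum_eq_zero_iff_of_nonneg t3').1 s3 (x, y) hp
      simp only at this
      linarith
    -- z is constant on J \ I
    have hconst : ∀ x ∈ (↑(J \ I) : Set P), ∀ y ∈ (↑(J \ I) : Set P), z x = z y := by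
      intro x hx y hy
      obtain ⟨w⟩ := hconn.preconnected ⟨x, hx⟩ ⟨y, hy⟩
      exact walk_const P z e3 w
    set t := z w0 with ht
    have ht0 : 0 ≤ t := (hzS.1 w0).1
    have ht1 : t ≤ 1 := (hzS.1 w0).2
    have hw0W : w0 ∈ (↑(J \ I) : Set P) := by simp [hw0J, hw0I]
    rw [convexHull_pair]
    refine ⟨1 - t, t, by linarith, ht0, by ring, ?_⟩
    funext x
    simp only [Pi.add_apply, Pi.smul_apply, smul_eq_mul]
    by_cases hxI : x ∈ I
    · simp only [rho, if_pos hxI, if_pos (hsub hxI)]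
      rw [e1 x hxI]
      ring
    · by_cases hxJ : x ∈ J
      · have hxW : x ∈ (↑(J \ I) : Set P) := by simp [hxJ, hxI]
        rw [hconst x hxW w0 hw0W]
        simp [rho, hxI, hxJ, ← ht]
      · rw [e2 x hxJ]
        simp [rho, hxI, hxJ]

/-- Forward direction: connectivity. -/
lemma conn_of_edge {I J : Finset P} (hI : IsIdealF P I) (hJ : IsIdealF P J)
    (hne : I ≠ J) (hsub : I ⊆ J)
    (hedge : IsEdgeOf P (orderPolytope P) (rho P I) (rho P J)) :
    ConnIn P (↑(J \ I) : Set P) := by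
  have hW : ∃ w, w ∈ J ∧ w ∉ I := by
    by_contra hc
    push_neg at hc
    exact hne (Finset.Subset.antisymm hsub hc)
  obtain ⟨w0, hw0J, hw0I⟩ := hW
  have hw0W : w0 ∈ (↑(J \ I) : Set P) := by simp [hw0J, hw0I]
  rw [ConnIn, SimpleGraph.connected_iff]
  refine ⟨?_, ⟨⟨w0, hw0W⟩⟩⟩
  by_contra hpc
  simp only [SimpleGraph.Preconnected] at hpc
  push_neg at hpc
  obtain ⟨a0, b0, hnr⟩ := hpc
  -- the reachable part
  set G := SimpleGraph.induce (↑(J \ I) : Set P) (compGraph P) with hG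
  set R : P → Prop := fun x => ∃ hx : x ∈ (↑(J \ I) : Set P), G.Reachable a0 ⟨x, hx⟩ with hR
  set W1 : Finset P := (J \ I).filter R with hW1
  set W2 : Finset P := (J \ I).filter (fun x => ¬ R x) with hW2
  have hRa0 : R ↑a0 := ⟨a0.2, by rw [Subtype.coe_eta]⟩
  have hnRb0 : ¬ R ↑b0 := by
    rintro ⟨hb, hr⟩
    exact hnr (by rwa [Subtype.coe_eta] at hr)
  -- adjacency closure of R within J \ I
  have hclos : ∀ x, R x → ∀ y, y ∈ J → y ∉ I → y ≠ x → (y ≤ x ∨ x ≤ y) → R y := by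
    rintro x ⟨hx, hrx⟩ y hyJ hyI hyx hcomp
    have hy : y ∈ (↑(J \ I) : Set P) := by simp [hyJ, hyI]
    have hadj : G.Adj ⟨x, hx⟩ ⟨y, hy⟩ := by
      rw [hG]
      exact SimpleGraph.comap_adj.2 ⟨Ne.symm hyx, hcomp.symm⟩
    exact ⟨hy, hrx.trans hadj.reachable⟩
  have hKideal : IsIdealF P (I ∪ W1) := by
    intro x y hx hyx
    simp only [Finset.mem_union] at hx ⊢
    rcases hx with hx | hx
    · exact Or.inl (hI hx hyx)
    · simp only [hW1, Finset.mem_filter, Finset.mem_sdiff] at hx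
      obtain ⟨⟨hxJ, hxI⟩, hRx⟩ := hx
      have hyJ : y ∈ J := hJ hxJ hyx
      by_cases hyI : y ∈ I
      · exact Or.inl hyI
      · by_cases hyx' : y = x
        · subst hyx'
          exact Or.inr (by simp [hW1, Finset.mem_filter, hyJ, hyI, hRx])
        · have : R y := hclos x hRx y hyJ hyI hyx' (Or.inl hyx)
          exact Or.inr (by simp [hW1, Finset.mem_filter, hyJ, hyI, this])
  have hLideal : IsIdealF P (I ∪ W2) := by
    intro x y hx hyx
    simp only [Finset.mem_union] at hx ⊢
    rcases hx with hx | hx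
    · exact Or.inl (hI hx hyx)
    · simp only [hW2, Finset.mem_filter, Finset.mem_sdiff] at hx
      obtain ⟨⟨hxJ, hxI⟩, hRx⟩ := hx
      have hyJ : y ∈ J := hJ hxJ hyx
      by_cases hyI : y ∈ I
      · exact Or.inl hyI
      · by_cases hyx' : y = x
        · subst hyx'
          exact Or.inr (by simp [hW2, Finset.mem_filter, hyJ, hyI, hRx])
        · have hnRy : ¬ R y := by
            intro hRy
            exact hRx (hclos y hRy x hxJ hxI (fun h => hyx' h.symm) (Or.inr hyx))
          exact Or.inr (by simp [hW2, Finset.mem_filter, hyJ, hyI, hnRy])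
  have hsum : rho P (I ∪ W1) + rho P (I ∪ W2) = rho P I + rho P J := by
    funext x
    simp only [Pi.add_apply]
    by_cases hxI : x ∈ I
    · have h1 : x ∈ I ∪ W1 := Finset.mem_union_left _ hxI
      have h2 : x ∈ I ∪ W2 := Finset.mem_union_left _ hxI
      simp [rho, h1, h2, hxI, hsub hxI]
    · by_cases hxJ : x ∈ J
      · by_cases hRx : R x
        · have h1 : x ∈ I ∪ W1 := Finset.mem_union_right _ (by
            simp [hW1, Finset.mem_filter, hxJ, hxI, hRx])
          have h2 : x ∉ I ∪ W2 := by
            simp [hW2, Finset.mem_filter, hxI, hRx]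
          simp [rho, h1, h2, hxI, hxJ]
        · have h1 : x ∉ I ∪ W1 := by
            simp [hW1, Finset.mem_filter, hxI, hRx]
          have h2 : x ∈ I ∪ W2 := Finset.mem_union_right _ (by
            simp [hW2, Finset.mem_filter, hxJ, hxI, hRx])
          simp [rho, h1, h2, hxI, hxJ]
      · have h1 : x ∉ I ∪ W1 := by
          simp [hW1, Finset.mem_filter, hxI, hxJ]
        have h2 : x ∉ I ∪ W2 := by
          simp [hW2, Finset.mem_filter, hxI, hxJ]
        simp [rho, h1, h2, hxI, hxJ]
  have hsplit := edge_split P hKideal hLideal hedge hne hsum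
  have ha0W1 : ↑a0 ∈ W1 := by
    have := a0.2
    simp only [Finset.coe_sdiff, Set.mem_diff, Finset.mem_coe] at this
    simp [hW1, Finset.mem_filter, Finset.mem_sdiff, this.1, this.2, hRa0]
  have ha0I : (↑a0 : P) ∉ I := by
    have := a0.2
    simp only [Finset.coe_sdiff, Set.mem_diff, Finset.mem_coe] at this
    exact this.2
  rcases hsplit with h | h
  · -- I ∪ W1 = I, but a0 ∈ W1 \ I
    exact ha0I (Finset.union_eq_left.mp h ha0W1)
  · -- I ∪ W1 = J, but b0 ∈ J with ¬ R b0 and b0 ∉ I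
    have hb0 := b0.2
    simp only [Finset.coe_sdiff, Set.mem_diff, Finset.mem_coe] at hb0
    have : (↑b0 : P) ∈ I ∪ W1 := by rw [h]; exact hb0.1
    simp only [Finset.mem_union] at this
    rcases this with h' | h'
    · exact hb0.2 h'
    · simp only [hW1, Finset.mem_filter] at h'
      exact hnRb0 h'.2

lemma subset_or_subset_of_edge {I J : Finset P} (hI : IsIdealF P I) (hJ : IsIdealF P J)
    (hne : I ≠ J) (hedge : IsEdgeOf P (orderPolytope P) (rho P I) (rho P J)) :
    I ⊆ J ∨ J ⊆ I := by
  by_contra hc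
  push_neg at hc
  have hKideal : IsIdealF P (I ∩ J) := fun x y hx hyx =>
    Finset.mem_inter.2 ⟨hI (Finset.mem_inter.1 hx).1 hyx, hJ (Finset.mem_inter.1 hx).2 hyx⟩
  have hLideal : IsIdealF P (I ∪ J) := by
    intro x y hx hyx
    simp only [Finset.mem_union] at hx ⊢
    rcases hx with hx | hx
    · exact Or.inl (hI hx hyx)
    · exact Or.inr (hJ hx hyx)
  have hsum : rho P (I ∩ J) + rho P (I ∪ J) = rho P I + rho P J := by
    funext x
    by_cases hi : x ∈ I <;> by_cases hj : x ∈ J <;>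
      simp [rho, hi, hj, Finset.mem_inter, Finset.mem_union]
  rcases edge_split P hKideal hLideal hedge hne hsum with h | h
  · exact hc.1 (Finset.inter_eq_left.1 h)
  · exact hc.2 (Finset.inter_eq_right.1 h)

lemma isEdgeOf_comm {S : Set (P → ℝ)} {u v : P → ℝ} (h : IsEdgeOf P S u v) :
    IsEdgeOf P S v u := by
  obtain ⟨h1, h2⟩ := h
  exact ⟨h1.symm, by rwa [Set.pair_comm]⟩

end Helpers

/-- For distinct poset ideals `I`, `J`, `conv {ρ I, ρ J}` is an edge of
the order polytope iff (after possibly swapping) `I ⊆ J` and `J \ I` is connected. -/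
theorem edge_orderPolytope_iff
    (I J : Finset P) (hI : IsIdealF P I) (hJ : IsIdealF P J) (hne : I ≠ J) :
    IsEdgeOf P (orderPolytope P) (rho P I) (rho P J) ↔
      ((I ⊆ J ∧ ConnIn P (↑(J \ I))) ∨ (J ⊆ I ∧ ConnIn P (↑(I \ J)))) := by
  constructor
  · intro hedge
    rcases subset_or_subset_of_edge P hI hJ hne hedge with hsub | hsub
    · exact Or.inl ⟨hsub, conn_of_edge P hI hJ hne hsub hedge⟩
    · exact Or.inr ⟨hsub, conn_of_edge P hJ hI hne.symm hsub (isEdgeOf_comm P hedge)⟩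
  · rintro (⟨hsub, hconn⟩ | ⟨hsub, hconn⟩)
    · exact edge_of_conn P hI hJ hne hsub hconn
    · exact isEdgeOf_comm P (edge_of_conn P hJ hI hne.symm hsub hconn)
end

section
/- Let P be a finite poset and let A and B be antichains of P with A ≠ B. Then conv{ρ(A), ρ(B)} is an edge of the chain polytope C(P) if and only if the symmetric difference A △ B is connected in P. -/
open Finset
open scoped Classical

variable (P : Type*) [Fintype P] [PartialOrder P]

section Helpers

variable {Q : Type*} [Fintype Q] [PartialOrder Q]

lemma rho_inj_s1 {A B : Finset Q} (h : rho Q A = rho Q B) : A = B := by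
  ext x
  have := congrFun h x
  simp only [rho] at this
  by_cases hx : x ∈ A <;> by_cases hy : x ∈ B <;> simp [hx, hy] at this ⊢

lemma rho_mem_chain {A : Finset Q} (hA : IsAntichainF Q A) : rho Q A ∈ chainPolytope Q := by
  constructor
  · intro x; unfold rho; split <;> norm_num
  · intro s hs
    unfold rho
    rw [Finset.sum_boole]
    have hcard : (s.filter (· ∈ A)).card ≤ 1 := by
      apply Finset.card_le_one.2
      intro a ha b hb
      rw [Finset.mem_filter] at ha hb
      by_contra hab
      rcases hs (by exact_mod_cast ha.1) (by exact_mod_cast hb.1) hab with h | h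
      · exact hA (by exact_mod_cast ha.2) (by exact_mod_cast hb.2) hab h
      · exact hA (by exact_mod_cast hb.2) (by exact_mod_cast ha.2) (Ne.symm hab) h
    exact_mod_cast hcard

lemma chain_single_le {f : Q → ℝ} (hf : f ∈ chainPolytope Q) (p : Q) : f p ≤ 1 := by
  have := hf.2 {p} (by simp [Set.pairwise_singleton, IsChain])
  simpa using this

lemma chain_pair_le {f : Q → ℝ} (hf : f ∈ chainPolytope Q) {a b : Q} (hne : a ≠ b)
    (hc : a ≤ b ∨ b ≤ a) : f a + f b ≤ 1 := by
  have hch : IsChain (· ≤ ·) (↑({a, b} : Finset Q) : Set Q) := by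
    intro x hx y hy hxy
    simp only [Finset.coe_insert, Finset.coe_singleton, Set.mem_insert_iff,
      Set.mem_singleton_iff] at hx hy
    rcases hx with rfl | rfl <;> rcases hy with rfl | rfl
    · exact absurd rfl hxy
    · exact hc
    · exact hc.symm
    · exact absurd rfl hxy
  have := hf.2 {a, b} hch
  rwa [Finset.sum_pair hne] at this

lemma combo_mem_chain {A B : Finset Q} (hA : IsAntichainF Q A) (hB : IsAntichainF Q B)
    {t : ℝ} (h0 : 0 ≤ t) (h1 : t ≤ 1) :
    t • rho Q A + (1 - t) • rho Q B ∈ chainPolytope Q := by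
  have hA' := rho_mem_chain hA
  have hB' := rho_mem_chain hB
  constructor
  · intro x
    have ha := hA'.1 x; have hb := hB'.1 x
    have : (0:ℝ) ≤ t * rho Q A x + (1 - t) * rho Q B x :=
      add_nonneg (mul_nonneg h0 ha) (mul_nonneg (by linarith) hb)
    simpa using this
  · intro s hs
    have h1A := hA'.2 s hs
    have h1B := hB'.2 s hs
    have : ∑ x ∈ s, (t * rho Q A x + (1 - t) * rho Q B x)
        = t * ∑ x ∈ s, rho Q A x + (1 - t) * ∑ x ∈ s, rho Q B x := by
      rw [Finset.sum_add_distrib, Finset.mul_sum, Finset.mul_sum]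
    calc ∑ x ∈ s, (t • rho Q A + (1 - t) • rho Q B) x
        = t * ∑ x ∈ s, rho Q A x + (1 - t) * ∑ x ∈ s, rho Q B x := by
          simpa using this
      _ ≤ t * 1 + (1 - t) * 1 := by
          apply add_le_add
          · exact mul_le_mul_of_nonneg_left h1A h0
          · exact mul_le_mul_of_nonneg_left h1B (by linarith)
      _ = 1 := by ring

lemma connected_to_edge {A B : Finset Q} (hA : IsAntichainF Q A) (hB : IsAntichainF Q B)
    (hne : A ≠ B) (hconn : ConnIn Q (↑((A \ B) ∪ (B \ A)))) :
    IsEdgeOf Q (chainPolytope Q) (rho Q A) (rho Q B) := by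
  set W : Finset Q := (A \ B) ∪ (B \ A) with hWdef
  have hWAB : ∀ x ∈ W, (x ∈ A ∧ x ∉ B) ∨ (x ∈ B ∧ x ∉ A) := by
    intro x hx
    simp only [hWdef, Finset.mem_union, Finset.mem_sdiff] at hx
    tauto
  have hWne : W.Nonempty := by
    rw [Finset.nonempty_iff_ne_empty]
    intro h
    rw [hWdef, Finset.union_eq_empty, Finset.sdiff_eq_empty_iff_subset,
      Finset.sdiff_eq_empty_iff_subset] at h
    exact hne (Finset.Subset.antisymm h.1 h.2)
  obtain ⟨w₀, hw₀⟩ := hWne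
  refine ⟨fun h => hne (rho_inj_s1 h), ?_⟩
  intro _
  -- the comparability pairs across the symmetric difference
  set D : Finset (Q × Q) :=
    ((A \ B) ×ˢ (B \ A)).filter (fun e => e.1 ≤ e.2 ∨ e.2 ≤ e.1) with hDdef
  have hDmem : ∀ e ∈ D, e.1 ∈ A ∧ e.1 ∉ B ∧ e.2 ∈ B ∧ e.2 ∉ A ∧ e.1 ≠ e.2 ∧
      (e.1 ≤ e.2 ∨ e.2 ≤ e.1) := by
    intro e he
    simp only [hDdef, Finset.mem_filter, Finset.mem_product, Finset.mem_sdiff] at he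
    refine ⟨he.1.1.1, he.1.1.2, he.1.2.1, he.1.2.2, ?_, he.2⟩
    intro h; rw [h] at he; exact he.1.1.2 he.1.2.1
  -- the linear functional
  set ℓ : (Q → ℝ) →L[ℝ] ℝ :=
    (∑ p ∈ A ∩ B, (ContinuousLinearMap.proj p : (Q → ℝ) →L[ℝ] ℝ))
    + (∑ e ∈ D, ((ContinuousLinearMap.proj e.1 : (Q → ℝ) →L[ℝ] ℝ)
        + (ContinuousLinearMap.proj e.2 : (Q → ℝ) →L[ℝ] ℝ)))
    - (∑ p ∈ (A ∪ B)ᶜ, (ContinuousLinearMap.proj p : (Q → ℝ) →L[ℝ] ℝ)) with hldef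
  have hl : ∀ f : Q → ℝ, ℓ f = (∑ p ∈ A ∩ B, f p) + (∑ e ∈ D, (f e.1 + f e.2))
      - ∑ p ∈ (A ∪ B)ᶜ, f p := by
    intro f
    simp [hldef, ContinuousLinearMap.sum_apply, ContinuousLinearMap.add_apply,
      ContinuousLinearMap.sub_apply, ContinuousLinearMap.proj_apply]
  set M : ℝ := ((A ∩ B).card : ℝ) + (D.card : ℝ) with hMdef
  -- upper bound
  have h1 : ∀ f ∈ chainPolytope Q, ∑ p ∈ A ∩ B, f p ≤ ((A ∩ B).card : ℝ) := by
    intro f hf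
    calc ∑ p ∈ A ∩ B, f p ≤ ∑ _p ∈ A ∩ B, (1:ℝ) :=
          Finset.sum_le_sum (fun p _ => chain_single_le hf p)
      _ = ((A ∩ B).card : ℝ) := by simp
  have h2 : ∀ f ∈ chainPolytope Q, ∑ e ∈ D, (f e.1 + f e.2) ≤ (D.card : ℝ) := by
    intro f hf
    calc ∑ e ∈ D, (f e.1 + f e.2) ≤ ∑ _e ∈ D, (1:ℝ) := by
          apply Finset.sum_le_sum
          intro e he
          obtain ⟨_, _, _, _, hne', hc⟩ := hDmem e he
          exact chain_pair_le hf hne' hc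
      _ = (D.card : ℝ) := by simp
  have h3 : ∀ f ∈ chainPolytope Q, (0:ℝ) ≤ ∑ p ∈ (A ∪ B)ᶜ, f p := by
    intro f hf
    exact Finset.sum_nonneg (fun p _ => hf.1 p)
  have hub : ∀ f ∈ chainPolytope Q, ℓ f ≤ M := by
    intro f hf
    rw [hl]
    have := h1 f hf; have := h2 f hf; have := h3 f hf
    rw [hMdef]; linarith
  -- value at rho A and rho B
  have hvalA : ℓ (rho Q A) = M := by
    rw [hl]
    have e1 : ∑ p ∈ A ∩ B, rho Q A p = ((A ∩ B).card : ℝ) := by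
      have h : ∀ p ∈ A ∩ B, rho Q A p = 1 :=
        fun p hp => if_pos (Finset.mem_inter.1 hp).1
      rw [Finset.sum_congr rfl h]; simp
    have e2 : ∑ e ∈ D, (rho Q A e.1 + rho Q A e.2) = (D.card : ℝ) := by
      have h : ∀ e ∈ D, rho Q A e.1 + rho Q A e.2 = 1 := by
        intro e he
        obtain ⟨h1', h2', h3', h4', _, _⟩ := hDmem e he
        simp [rho, h1', h4']
      rw [Finset.sum_congr rfl h]; simp
    have e3 : ∑ p ∈ (A ∪ B)ᶜ, rho Q A p = 0 := by
      apply Finset.sum_eq_zero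
      intro p hp
      rw [Finset.mem_compl, Finset.mem_union] at hp
      simp only [rho]
      exact if_neg (fun h => hp (Or.inl h))
    rw [e1, e2, e3, hMdef]; ring
  have hvalB : ℓ (rho Q B) = M := by
    rw [hl]
    have e1 : ∑ p ∈ A ∩ B, rho Q B p = ((A ∩ B).card : ℝ) := by
      have h : ∀ p ∈ A ∩ B, rho Q B p = 1 :=
        fun p hp => if_pos (Finset.mem_inter.1 hp).2
      rw [Finset.sum_congr rfl h]; simp
    have e2 : ∑ e ∈ D, (rho Q B e.1 + rho Q B e.2) = (D.card : ℝ) := by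
      have h : ∀ e ∈ D, rho Q B e.1 + rho Q B e.2 = 1 := by
        intro e he
        obtain ⟨h1', h2', h3', h4', _, _⟩ := hDmem e he
        simp [rho, h2', h3']
      rw [Finset.sum_congr rfl h]; simp
    have e3 : ∑ p ∈ (A ∪ B)ᶜ, rho Q B p = 0 := by
      apply Finset.sum_eq_zero
      intro p hp
      rw [Finset.mem_compl, Finset.mem_union] at hp
      simp only [rho]
      exact if_neg (fun h => hp (Or.inr h))
    rw [e1, e2, e3, hMdef]; ring
  -- equality analysis: maximizers lie on the segment
  have hface : ∀ f ∈ chainPolytope Q, ℓ f = M → f ∈ segment ℝ (rho Q A) (rho Q B) := by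
    intro f hf hfM
    rw [hl] at hfM
    have hb1 := h1 f hf; have hb2 := h2 f hf; have hb3 := h3 f hf
    have e1 : ∑ p ∈ A ∩ B, f p = ((A ∩ B).card : ℝ) := by rw [hMdef] at hfM; linarith
    have e2 : ∑ e ∈ D, (f e.1 + f e.2) = (D.card : ℝ) := by rw [hMdef] at hfM; linarith
    have e3 : ∑ p ∈ (A ∪ B)ᶜ, f p = 0 := by rw [hMdef] at hfM; linarith
    have hf1 : ∀ p ∈ A ∩ B, f p = 1 := by
      have : ∑ p ∈ A ∩ B, f p = ∑ _p ∈ A ∩ B, (1:ℝ) := by rw [e1]; simp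
      exact fun p hp =>
        (Finset.sum_eq_sum_iff_of_le (fun p _ => chain_single_le hf p)).1 this p hp
    have hf2 : ∀ e ∈ D, f e.1 + f e.2 = 1 := by
      have : ∑ e ∈ D, (f e.1 + f e.2) = ∑ _e ∈ D, (1:ℝ) := by rw [e2]; simp
      refine fun e he => (Finset.sum_eq_sum_iff_of_le (fun e he => ?_)).1 this e he
      obtain ⟨_, _, _, _, hne', hc⟩ := hDmem e he
      exact chain_pair_le hf hne' hc
    have hf3 : ∀ p : Q, p ∉ A → p ∉ B → f p = 0 := by
      intro p hpA hpB
      refine (Finset.sum_eq_zero_iff_of_nonneg (fun p _ => hf.1 p)).1 e3 p ?_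
      rw [Finset.mem_compl, Finset.mem_union]
      tauto
    -- crossing pairs equality
    have hedgeval : ∀ x y : Q, x ∈ W → y ∈ W → x ≠ y → (x ≤ y ∨ y ≤ x) →
        f x + f y = 1 := by
      intro x y hx hy hxy hc
      rcases hWAB x hx with ⟨hxA, hxB⟩ | ⟨hxB, hxA⟩ <;>
        rcases hWAB y hy with ⟨hyA, hyB⟩ | ⟨hyB, hyA⟩
      · rcases hc with h | h
        · exact absurd h (hA hxA hyA hxy)
        · exact absurd h (hA hyA hxA (Ne.symm hxy))
      · refine hf2 (x, y) ?_
        simp only [hDdef, Finset.mem_filter, Finset.mem_product, Finset.mem_sdiff]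
        exact ⟨⟨⟨hxA, hxB⟩, ⟨hyB, hyA⟩⟩, hc⟩
      · have := hf2 (y, x) (by
          simp only [hDdef, Finset.mem_filter, Finset.mem_product, Finset.mem_sdiff]
          exact ⟨⟨⟨hyA, hyB⟩, ⟨hxB, hxA⟩⟩, hc.symm⟩)
        linarith
      · rcases hc with h | h
        · exact absurd h (hB hxB hyB hxy)
        · exact absurd h (hB hyB hxB (Ne.symm hxy))
    -- propagation along the connected graph
    set t : ℝ := if w₀ ∈ A then f w₀ else 1 - f w₀ with htdef
    set QQ : Q → Prop := fun x => (x ∈ A → f x = t) ∧ (x ∈ B → f x = 1 - t) with hQQdef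
    set G := SimpleGraph.induce (↑W : Set Q) (compGraph Q) with hGdef
    have step : ∀ x y : ↥(↑W : Set Q), G.Adj x y → QQ ↑x → QQ ↑y := by
      intro x y hadj hq
      have hxy : (↑x : Q) ≠ ↑y ∧ ((↑x : Q) ≤ ↑y ∨ (↑y : Q) ≤ ↑x) := hadj
      have hxW : (↑x : Q) ∈ W := x.2
      have hyW : (↑y : Q) ∈ W := y.2
      have hev := hedgeval ↑x ↑y hxW hyW hxy.1 hxy.2
      rcases hWAB _ hxW with ⟨hxA, hxB⟩ | ⟨hxB, hxA⟩ <;>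
        rcases hWAB _ hyW with ⟨hyA, hyB⟩ | ⟨hyB, hyA⟩
      · rcases hxy.2 with h | h
        · exact absurd h (hA hxA hyA hxy.1)
        · exact absurd h (hA hyA hxA (Ne.symm hxy.1))
      · have hfx := hq.1 hxA
        exact ⟨fun h => absurd h hyA, fun _ => by linarith⟩
      · have hfx := hq.2 hxB
        exact ⟨fun _ => by linarith, fun h => absurd h hyB⟩
      · rcases hxy.2 with h | h
        · exact absurd h (hB hxB hyB hxy.1)
        · exact absurd h (hB hyB hxB (Ne.symm hxy.1))
    have htrans : ∀ x y : ↥(↑W : Set Q), G.Walk x y → QQ ↑x → QQ ↑y := by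
      intro x y w
      induction w with
      | nil => exact id
      | cons h _ ih => exact fun hq => ih (step _ _ h hq)
    have hbase : QQ w₀ := by
      by_cases hw₀A : w₀ ∈ A
      · have hw₀B : w₀ ∉ B := by
          rcases hWAB w₀ hw₀ with ⟨_, h⟩ | ⟨_, h⟩
          · exact h
          · exact absurd hw₀A h
        exact ⟨fun _ => by rw [htdef, if_pos hw₀A], fun h => absurd h hw₀B⟩
      · have hw₀B : w₀ ∈ B := by
          rcases hWAB w₀ hw₀ with ⟨h, _⟩ | ⟨h, _⟩
          · exact absurd h hw₀A
          · exact h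
        exact ⟨fun h => absurd h hw₀A, fun _ => by rw [htdef, if_neg hw₀A]; ring⟩
    have hQall : ∀ x ∈ W, QQ x := by
      intro x hx
      have hr : G.Reachable ⟨w₀, hw₀⟩ ⟨x, hx⟩ := hconn.preconnected _ _
      obtain ⟨w⟩ := hr
      exact htrans _ _ w hbase
    have ht0 : 0 ≤ t := by
      rw [htdef]
      split
      · exact hf.1 w₀
      · have := chain_single_le hf w₀; linarith
    have ht1 : t ≤ 1 := by
      rw [htdef]
      split
      · exact chain_single_le hf w₀
      · have := hf.1 w₀; linarith
    have hfun : f = t • rho Q A + (1 - t) • rho Q B := by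
      funext x
      by_cases hxA : x ∈ A <;> by_cases hxB : x ∈ B
      · have := hf1 x (Finset.mem_inter.2 ⟨hxA, hxB⟩)
        simp [rho, hxA, hxB, this]
      · have hxW : x ∈ W := by
          rw [hWdef, Finset.mem_union, Finset.mem_sdiff]
          exact Or.inl ⟨hxA, hxB⟩
        have := (hQall x hxW).1 hxA
        simp [rho, hxA, hxB, this]
      · have hxW : x ∈ W := by
          rw [hWdef, Finset.mem_union, Finset.mem_sdiff]
          exact Or.inr (Finset.mem_sdiff.2 ⟨hxB, hxA⟩)
        have := (hQall x hxW).2 hxB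
        simp [rho, hxA, hxB, this]
      · have := hf3 x hxA hxB
        simp [rho, hxA, hxB, this]
    show ∃ a b : ℝ, 0 ≤ a ∧ 0 ≤ b ∧ a + b = 1 ∧ a • rho Q A + b • rho Q B = f
    exact ⟨t, 1 - t, ht0, by linarith, by ring, hfun.symm⟩
  -- assemble the exposed face
  refine ⟨ℓ, ?_⟩
  rw [convexHull_pair]
  ext f
  constructor
  · rintro ⟨a, b, ha, hb, hab, rfl⟩
    have hbeq : b = 1 - a := by linarith
    subst hbeq
    have hfC : a • rho Q A + (1 - a) • rho Q B ∈ chainPolytope Q :=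
      combo_mem_chain hA hB ha (by linarith)
    refine ⟨hfC, ?_⟩
    intro y hy
    have : ℓ (a • rho Q A + (1 - a) • rho Q B) = M := by
      rw [map_add, map_smul, map_smul, hvalA, hvalB]
      simp; ring
    rw [this]
    exact hub y hy
  · rintro ⟨hfC, hmax⟩
    have hge : M ≤ ℓ f := hvalA ▸ hmax (rho Q A) (rho_mem_chain hA)
    have := hface f hfC (le_antisymm (hub f hfC) hge)
    exact this

lemma edge_to_connected {A B : Finset Q} (hA : IsAntichainF Q A) (hB : IsAntichainF Q B)
    (hne : A ≠ B) (hedge : IsEdgeOf Q (chainPolytope Q) (rho Q A) (rho Q B)) :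
    ConnIn Q (↑((A \ B) ∪ (B \ A))) := by
  set W : Finset Q := (A \ B) ∪ (B \ A) with hWdef
  have hWAB : ∀ x ∈ W, (x ∈ A ∧ x ∉ B) ∨ (x ∈ B ∧ x ∉ A) := by
    intro x hx
    simp only [hWdef, Finset.mem_union, Finset.mem_sdiff] at hx
    tauto
  have hWne : W.Nonempty := by
    rw [Finset.nonempty_iff_ne_empty]
    intro h
    rw [hWdef, Finset.union_eq_empty, Finset.sdiff_eq_empty_iff_subset,
      Finset.sdiff_eq_empty_iff_subset] at h
    exact hne (Finset.Subset.antisymm h.1 h.2)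
  set G := SimpleGraph.induce (↑W : Set Q) (compGraph Q) with hGdef
  rw [ConnIn]
  rw [SimpleGraph.connected_iff]
  have hnonempty : Nonempty (↥(↑W : Set Q)) := ⟨⟨hWne.choose, hWne.choose_spec⟩⟩
  refine ⟨?_, hnonempty⟩
  by_contra hnp
  rw [SimpleGraph.Preconnected] at hnp
  push_neg at hnp
  obtain ⟨u, v, huv⟩ := hnp
  -- the reachable part
  set W₁ : Finset Q := W.filter (fun x => ∃ h : x ∈ (↑W : Set Q), G.Reachable u ⟨x, h⟩)
    with hW₁def
  have hW₁sub : W₁ ⊆ W := Finset.filter_subset _ _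
  have huW₁ : (↑u : Q) ∈ W₁ := by
    rw [hW₁def, Finset.mem_filter]
    exact ⟨u.2, ⟨u.2, by convert SimpleGraph.Reachable.refl u⟩⟩
  have hvW : (↑v : Q) ∈ W := v.2
  have hvW₁ : (↑v : Q) ∉ W₁ := by
    rw [hW₁def, Finset.mem_filter]
    rintro ⟨_, h, hr⟩
    exact huv (by convert hr)
  -- no comparability across the cut
  have hcross : ∀ x ∈ W₁, ∀ y ∈ W, y ∉ W₁ → ¬(x ≠ y ∧ (x ≤ y ∨ y ≤ x)) := by
    rintro x hx y hy hy1 ⟨hxy, hc⟩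
    rw [hW₁def, Finset.mem_filter] at hx
    obtain ⟨hxW, hxmem, hr⟩ := hx
    have hadj : G.Adj ⟨x, hxmem⟩ ⟨y, hy⟩ := ⟨hxy, hc⟩
    apply hy1
    rw [hW₁def, Finset.mem_filter]
    exact ⟨hy, hy, hr.trans hadj.reachable⟩
  -- the swapped antichains
  set A' : Finset Q := (A ∩ B) ∪ (A ∩ W₁) ∪ (B ∩ (W \ W₁)) with hA'def
  set B' : Finset Q := (A ∩ B) ∪ (B ∩ W₁) ∪ (A ∩ (W \ W₁)) with hB'def
  have hsub : ∀ x : Q, x ∈ W → x ∉ W₁ → x ∈ W \ W₁ := fun x h h1 =>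
    Finset.mem_sdiff.2 ⟨h, h1⟩
  -- antichain proofs
  have hanti : ∀ C₁ C₂ : Finset Q, IsAntichain (· ≤ ·) (↑C₁ : Set Q) →
      IsAntichain (· ≤ ·) (↑C₂ : Set Q) →
      IsAntichain (· ≤ ·) (↑((C₁ ∩ B ∪ C₁ ∩ W₁) ∪ C₂ ∩ (W \ W₁)) : Set Q) → True := fun _ _ _ _ _ => trivial
  have hantiA' : IsAntichainF Q A' := by
    intro x hx y hy hxy hle
    rw [Finset.mem_coe, hA'def] at hx hy
    simp only [Finset.mem_union, Finset.mem_inter, Finset.mem_sdiff] at hx hy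
    have hcomp : (x ≤ y ∨ y ≤ x) := Or.inl hle
    rcases hx with (⟨hx1, _⟩ | ⟨hx1, hx2⟩) | ⟨hx1, hx2⟩ <;>
      rcases hy with (⟨hy1, _⟩ | ⟨hy1, hy2⟩) | ⟨hy1, hy2⟩
    · exact hA hx1 hy1 hxy hle
    · exact hA hx1 hy1 hxy hle
    · rename_i hx2
      exact hB hx2 hy1 hxy hle
    · exact hA hx1 hy1 hxy hle
    · exact hA hx1 hy1 hxy hle
    · exact hcross x hx2 y hy2.1 hy2.2 ⟨hxy, hcomp⟩
    · rename_i hy2'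
      exact hB hx1 hy2' hxy hle
    · exact hcross y hy2 x hx2.1 hx2.2 ⟨Ne.symm hxy, hcomp.symm⟩
    · exact hB hx1 hy1 hxy hle
  have hantiB' : IsAntichainF Q B' := by
    intro x hx y hy hxy hle
    rw [Finset.mem_coe, hB'def] at hx hy
    simp only [Finset.mem_union, Finset.mem_inter, Finset.mem_sdiff] at hx hy
    have hcomp : (x ≤ y ∨ y ≤ x) := Or.inl hle
    rcases hx with (⟨hx1, _⟩ | ⟨hx1, hx2⟩) | ⟨hx1, hx2⟩ <;>
      rcases hy with (⟨hy1, _⟩ | ⟨hy1, hy2⟩) | ⟨hy1, hy2⟩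
    · exact hA hx1 hy1 hxy hle
    · rename_i hx2
      exact hB hx2 hy1 hxy hle
    · exact hA hx1 hy1 hxy hle
    · rename_i hy2'
      exact hB hx1 hy2' hxy hle
    · exact hB hx1 hy1 hxy hle
    · exact hcross x hx2 y hy2.1 hy2.2 ⟨hxy, hcomp⟩
    · exact hA hx1 hy1 hxy hle
    · exact hcross y hy2 x hx2.1 hx2.2 ⟨Ne.symm hxy, hcomp.symm⟩
    · exact hA hx1 hy1 hxy hle
  -- indicator sum identity
  have hsum : rho Q A' + rho Q B' = rho Q A + rho Q B := by
    funext x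
    have hW₁W : x ∈ W₁ → x ∈ W := fun h => hW₁sub h
    by_cases hxA : x ∈ A <;> by_cases hxB : x ∈ B <;> by_cases hxW1 : x ∈ W₁ <;>
      simp only [Pi.add_apply, rho, hA'def, hB'def, Finset.mem_union, Finset.mem_inter,
        Finset.mem_sdiff, hWdef, hxA, hxB, hxW1] <;>
      norm_num
  -- extract the functional
  obtain ⟨hρne, hexp⟩ := hedge
  have hconvne : ((convexHull ℝ) {rho Q A, rho Q B}).Nonempty :=
    ⟨rho Q A, subset_convexHull ℝ _ (by simp)⟩
  obtain ⟨ℓ, hface⟩ := hexp hconvne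
  have hAface : rho Q A ∈ {x | x ∈ chainPolytope Q ∧ ∀ y ∈ chainPolytope Q, ℓ y ≤ ℓ x} := by
    rw [← hface]
    exact subset_convexHull ℝ _ (by simp)
  have hBface : rho Q B ∈ {x | x ∈ chainPolytope Q ∧ ∀ y ∈ chainPolytope Q, ℓ y ≤ ℓ x} := by
    rw [← hface]
    exact subset_convexHull ℝ _ (by simp)
  have hA'C : rho Q A' ∈ chainPolytope Q := rho_mem_chain hantiA'
  have hB'C : rho Q B' ∈ chainPolytope Q := rho_mem_chain hantiB'
  have hMeq : ℓ (rho Q A') + ℓ (rho Q B') = ℓ (rho Q A) + ℓ (rho Q B) := by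
    rw [← map_add, ← map_add, hsum]
  have hA'max : ℓ (rho Q A') = ℓ (rho Q A) := by
    have h1 := hAface.2 _ hA'C
    have h2 := hAface.2 _ hB'C
    have h3 := hBface.2 _ hA'C
    have hAB : ℓ (rho Q A) = ℓ (rho Q B) :=
      le_antisymm (hBface.2 _ hAface.1) (hAface.2 _ hBface.1)
    linarith
  have hA'face : rho Q A' ∈ (convexHull ℝ) {rho Q A, rho Q B} := by
    rw [hface]
    exact ⟨hA'C, fun y hy => (hAface.2 y hy).trans_eq hA'max.symm⟩
  rw [convexHull_pair] at hA'face
  obtain ⟨a, b, ha, hb, hab, heq⟩ := hA'face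
  -- evaluate at v to show a = 0
  have ha0 : a = 0 := by
    have hv := congrFun heq ↑v
    simp only [Pi.add_apply, Pi.smul_apply, smul_eq_mul, rho] at hv
    have hvW₁' : (↑v : Q) ∉ W₁ := hvW₁
    rcases hWAB _ hvW with ⟨hvA, hvB⟩ | ⟨hvB, hvA⟩
    · have hAv : (↑v : Q) ∉ A' := by
        rw [hA'def]
        simp only [Finset.mem_union, Finset.mem_inter, Finset.mem_sdiff]
        push_neg
        exact ⟨⟨fun _ => hvB, fun _ => hvW₁'⟩, fun h => absurd h hvB⟩
      rw [if_pos hvA, if_neg hvB, if_neg hAv] at hv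
      linarith
    · have hAv : (↑v : Q) ∈ A' := by
        rw [hA'def]
        simp only [Finset.mem_union, Finset.mem_inter, Finset.mem_sdiff]
        exact Or.inr ⟨hvB, hvW, hvW₁'⟩
      rw [if_neg hvA, if_pos hvB, if_pos hAv] at hv
      linarith
  have hbeq : b = 1 := by linarith
  subst ha0 hbeq
  have hA'B : A' = B := by
    apply rho_inj_s1
    funext x
    have := congrFun heq x
    simpa using this.symm
  -- contradiction at u
  rcases hWAB _ (hW₁sub huW₁) with ⟨huA, huB⟩ | ⟨huB, huA⟩
  · have : (↑u : Q) ∈ A' := by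
      rw [hA'def]
      simp only [Finset.mem_union, Finset.mem_inter]
      exact Or.inl (Or.inr ⟨huA, huW₁⟩)
    rw [hA'B] at this
    exact huB this
  · have : (↑u : Q) ∉ A' := by
      rw [hA'def]
      simp only [Finset.mem_union, Finset.mem_inter, Finset.mem_sdiff]
      push_neg
      exact ⟨⟨fun h => absurd h huA, fun h => absurd h huA⟩, fun _ _ => huW₁⟩
    rw [hA'B] at this
    exact this huB

end Helpers

/-- For distinct antichains `A`, `B`, `conv {ρ A, ρ B}` is an edge of
the chain polytope iff the symmetric difference `A △ B` is connected in `P`. -/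
theorem edge_chainPolytope_iff
    (A B : Finset P) (hA : IsAntichainF P A) (hB : IsAntichainF P B) (hne : A ≠ B) :
    IsEdgeOf P (chainPolytope P) (rho P A) (rho P B) ↔
      ConnIn P (↑((A \ B) ∪ (B \ A))) := by
  constructor
  · exact fun h => edge_to_connected hA hB hne h
  · exact fun h => connected_to_edge hA hB hne h
end
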